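/- arXiv:2104.04303 — 4 statements merged into one kernel-verified Lean document; each statement's English description precedes it below -/
import Mathlib

section
/- The function f(β₁,…,βₙ) = Σ_{i=1}^n d_i σ_i (√(2c)/π) G₀(β_i/√2), restricted to the simplex-like set { β : β_i > 0, Σ β_i σ_i √c = c(1-μ_T) - r_T }, has a unique minimizer, assuming G₀ is strictly convex and decreasing on (0,∞) with G₀(b) → 0 as b → ∞ and G₀(b) → ∞ as b → 0⁺. -/
open Filter

theorem stmt6 (n : ℕ) (hn : 0 < n) (d σ : Fin n → ℝ)
    (hd : ∀ i, 0 < d i) (hσ : ∀ i, 0 < σ i)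
    (c μT rT : ℝ) (hc : 0 < c) (hS : 0 < c * (1 - μT) - rT)
    (G₀ : ℝ → ℝ)
    (hconv : StrictConvexOn ℝ (Set.Ioi 0) G₀)
    (hanti : StrictAntiOn G₀ (Set.Ioi 0))
    (htop : Tendsto G₀ atTop (nhds 0))
    (hzero : Tendsto G₀ (nhdsWithin 0 (Set.Ioi 0)) atTop) :
    ∃! β : Fin n → ℝ,
      ((∀ i, 0 < β i) ∧ ∑ i, β i * σ i * Real.sqrt c = c * (1 - μT) - rT) ∧
      ∀ β' : Fin n → ℝ,
        ((∀ i, 0 < β' i) ∧ ∑ i, β' i * σ i * Real.sqrt c = c * (1 - μT) - rT) →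
        (∑ i, d i * σ i * (Real.sqrt (2 * c) / Real.pi) * G₀ (β i / Real.sqrt 2)) ≤
          ∑ i, d i * σ i * (Real.sqrt (2 * c) / Real.pi) * G₀ (β' i / Real.sqrt 2) := by
  haveI : Nonempty (Fin n) := Fin.pos_iff_nonempty.mp hn
  have hπ := Real.pi_pos
  have h2 : (1:ℝ) ≤ Real.sqrt 2 := by
    rw [show (1:ℝ) = Real.sqrt 1 by simp]
    exact Real.sqrt_le_sqrt (by norm_num)
  have hs2 : (0:ℝ) < Real.sqrt 2 := lt_of_lt_of_le one_pos h2
  have hsc : (0:ℝ) < Real.sqrt c := Real.sqrt_pos.2 hc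
  have hs2c : (0:ℝ) < Real.sqrt (2 * c) := Real.sqrt_pos.2 (by linarith)
  have hn' : (0:ℝ) < (n:ℝ) := by exact_mod_cast hn
  set S := c * (1 - μT) - rT with hSdef
  set w : Fin n → ℝ := fun i => d i * σ i * (Real.sqrt (2 * c) / Real.pi) with hwdef
  have hwpos : ∀ i, 0 < w i := fun i =>
    mul_pos (mul_pos (hd i) (hσ i)) (div_pos hs2c hπ)
  set g : (Fin n → ℝ) → ℝ := fun β => ∑ i, w i * G₀ (β i / Real.sqrt 2) with hgdef
  -- positivity of G₀ on (0, ∞)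
  have hGnn : ∀ x : ℝ, 0 < x → 0 ≤ G₀ x := by
    intro x hx
    refine le_of_tendsto htop ?_
    filter_upwards [eventually_ge_atTop (x + 1)] with y hy
    exact (hanti (Set.mem_Ioi.2 hx) (Set.mem_Ioi.2 (by linarith)) (by linarith)).le
  have hGpos : ∀ x : ℝ, 0 < x → 0 < G₀ x := fun x hx =>
    lt_of_le_of_lt (hGnn (x + 1) (by linarith))
      (hanti (Set.mem_Ioi.2 hx) (Set.mem_Ioi.2 (by linarith)) (lt_add_one x))
  have hGcont : ContinuousOn G₀ (Set.Ioi 0) := hconv.convexOn.continuousOn isOpen_Ioi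
  -- a reference feasible point
  set β0 : Fin n → ℝ := fun i => S / (n * (σ i * Real.sqrt c)) with hβ0def
  have hβ0pos : ∀ i, 0 < β0 i := fun i =>
    div_pos hS (mul_pos hn' (mul_pos (hσ i) hsc))
  have hβ0sum : ∑ i, β0 i * σ i * Real.sqrt c = S := by
    have h1 : ∀ i, β0 i * σ i * Real.sqrt c = S / n := by
      intro i
      have hσi := (hσ i).ne'
      rw [hβ0def]
      field_simp
    rw [Finset.sum_congr rfl fun i _ => h1 i, Finset.sum_const, Finset.card_univ,
      Fintype.card_fin, nsmul_eq_mul]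
    field_simp
  set M := ∑ i, w i * G₀ (β0 i / Real.sqrt 2) with hMdef
  have hM0 : 0 ≤ M := Finset.sum_nonneg fun i _ =>
    (mul_pos (hwpos i) (hGpos _ (div_pos (hβ0pos i) hs2))).le
  set wmin := Finset.univ.inf' Finset.univ_nonempty w with hwmindef
  have hwminpos : 0 < wmin := by
    rw [hwmindef, Finset.lt_inf'_iff]
    exact fun i _ => hwpos i
  set C := (M + 1) / wmin with hCdef
  have hCpos : 0 < C := div_pos (by linarith) hwminpos
  -- δ from the divergence of G₀ at 0⁺
  obtain ⟨δ, hδpos, hδ⟩ : ∃ δ, 0 < δ ∧ ∀ x : ℝ, 0 < x → x < δ → C ≤ G₀ x := by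
    have h := hzero.eventually (eventually_ge_atTop C)
    rw [eventually_nhdsWithin_iff, Metric.eventually_nhds_iff] at h
    obtain ⟨δ, hδpos, h⟩ := h
    refine ⟨δ, hδpos, fun x hx hxδ => h ?_ hx⟩
    rw [Real.dist_eq, sub_zero, abs_of_pos hx]
    exact hxδ
  set ε := min δ (Finset.univ.inf' Finset.univ_nonempty β0) with hεdef
  have hεpos : 0 < ε := by
    rw [hεdef, lt_min_iff]
    exact ⟨hδpos, by rw [Finset.lt_inf'_iff]; exact fun i _ => hβ0pos i⟩
  have hεδ : ε ≤ δ := min_le_left _ _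
  have hεβ0 : ∀ i, ε ≤ β0 i := fun i =>
    le_trans (min_le_right _ _) (Finset.inf'_le _ (Finset.mem_univ i))
  set B : Fin n → ℝ := fun i => S / (σ i * Real.sqrt c) with hBdef
  set K := (Set.univ.pi fun i => Set.Icc ε (B i)) ∩
    {β : Fin n → ℝ | ∑ i, β i * σ i * Real.sqrt c = S} with hKdef
  have hLcont : Continuous fun β : Fin n → ℝ => ∑ i, β i * σ i * Real.sqrt c :=
    continuous_finset_sum _ fun i _ =>
      ((continuous_apply i).mul continuous_const).mul continuous_const
  have hKcompact : IsCompact K :=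
    (isCompact_univ_pi fun i => isCompact_Icc).inter_right
      (isClosed_eq hLcont continuous_const)
  have hβ0B : ∀ i, β0 i ≤ B i := by
    intro i
    rw [hβ0def, hBdef]
    apply div_le_div_of_nonneg_left hS.le (mul_pos (hσ i) hsc)
    have h1n : (1:ℝ) ≤ (n:ℝ) := Nat.one_le_cast.mpr hn
    nlinarith [mul_pos (hσ i) hsc]
  have hβ0K : β0 ∈ K := by
    refine ⟨Set.mem_univ_pi.2 fun i => ⟨hεβ0 i, hβ0B i⟩, hβ0sum⟩
  -- continuity of the objective on K
  have hKpos : ∀ β ∈ K, ∀ i, 0 < β i := fun β hβ i =>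
    lt_of_lt_of_le hεpos (hβ.1 i (Set.mem_univ i)).1
  have hgcont : ContinuousOn g K := by
    rw [hgdef]
    apply continuousOn_finset_sum
    intro i _
    apply continuousOn_const.mul
    apply hGcont.comp ((continuous_apply i).div_const _).continuousOn
    intro β hβ
    exact Set.mem_Ioi.2 (div_pos (hKpos β hβ i) hs2)
  obtain ⟨βm, hβmK, hβmmin⟩ := hKcompact.exists_isMinOn ⟨β0, hβ0K⟩ hgcont
  have hβmpos : ∀ i, 0 < βm i := hKpos βm hβmK
  have hβmsum : ∑ i, βm i * σ i * Real.sqrt c = S := hβmK.2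
  have hminK : ∀ β ∈ K, g βm ≤ g β := fun β hβ => hβmmin hβ
  have hMle : g βm ≤ M := hminK β0 hβ0K
  -- minimality over the whole feasible set
  have hmain : ∀ β' : Fin n → ℝ, (∀ i, 0 < β' i) →
      (∑ i, β' i * σ i * Real.sqrt c = S) → g βm ≤ g β' := by
    intro β' hpos hsum
    by_cases hcase : ∀ i, ε ≤ β' i
    · refine hminK β' ⟨Set.mem_univ_pi.2 fun i => ⟨hcase i, ?_⟩, hsum⟩
      have hterm : β' i * σ i * Real.sqrt c ≤ S := by
        rw [← hsum]
        exact Finset.single_le_sum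
          (f := fun j => β' j * σ j * Real.sqrt c)
          (fun j _ => (mul_pos (mul_pos (hpos j) (hσ j)) hsc).le) (Finset.mem_univ i)
      rw [hBdef]
      rw [le_div_iff₀ (mul_pos (hσ i) hsc)]
      calc β' i * (σ i * Real.sqrt c) = β' i * σ i * Real.sqrt c := by ring
        _ ≤ S := hterm
    · push_neg at hcase
      obtain ⟨i, hi⟩ := hcase
      have hxi : 0 < β' i / Real.sqrt 2 := div_pos (hpos i) hs2
      have hgi : C ≤ G₀ (β' i / Real.sqrt 2) := by
        apply hδ _ hxi
        have h1 : β' i / Real.sqrt 2 ≤ β' i := div_le_self (hpos i).le h2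
        have h2' : β' i < δ := lt_of_lt_of_le hi hεδ
        linarith
      have hsingle : w i * G₀ (β' i / Real.sqrt 2) ≤ g β' := by
        rw [hgdef]
        exact Finset.single_le_sum
          (f := fun j => w j * G₀ (β' j / Real.sqrt 2))
          (fun j _ => (mul_pos (hwpos j) (hGpos _ (div_pos (hpos j) hs2))).le)
          (Finset.mem_univ i)
      have hwC : M + 1 ≤ w i * G₀ (β' i / Real.sqrt 2) := by
        have e1 : M + 1 = wmin * C := by
          rw [hCdef]; field_simp
        have e2 : wmin * C ≤ w i * C :=
          mul_le_mul_of_nonneg_right (Finset.inf'_le _ (Finset.mem_univ i)) hCpos.le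
        have e3 : w i * C ≤ w i * G₀ (β' i / Real.sqrt 2) :=
          mul_le_mul_of_nonneg_left hgi (hwpos i).le
        linarith
      linarith
  -- midpoint strict convexity helper
  have key : ∀ a b : ℝ, 0 < a → 0 < b → a ≠ b →
      G₀ ((a + b) / 2 / Real.sqrt 2) <
        (G₀ (a / Real.sqrt 2) + G₀ (b / Real.sqrt 2)) / 2 := by
    intro a b ha hb hab
    have hx : a / Real.sqrt 2 ∈ Set.Ioi (0:ℝ) := Set.mem_Ioi.2 (div_pos ha hs2)
    have hy : b / Real.sqrt 2 ∈ Set.Ioi (0:ℝ) := Set.mem_Ioi.2 (div_pos hb hs2)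
    have hxy : a / Real.sqrt 2 ≠ b / Real.sqrt 2 := by
      intro h
      apply hab
      field_simp at h
      exact h
    have h12 := hconv.2 hx hy hxy (by norm_num : (0:ℝ) < 1/2)
      (by norm_num : (0:ℝ) < 1/2) (by norm_num)
    have e1 : (1/2 : ℝ) • (a / Real.sqrt 2) + (1/2 : ℝ) • (b / Real.sqrt 2)
        = (a + b) / 2 / Real.sqrt 2 := by
      simp only [smul_eq_mul]; ring
    rw [e1] at h12
    calc G₀ ((a + b) / 2 / Real.sqrt 2)
        < (1/2 : ℝ) • G₀ (a / Real.sqrt 2) + (1/2 : ℝ) • G₀ (b / Real.sqrt 2) := h12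
      _ = (G₀ (a / Real.sqrt 2) + G₀ (b / Real.sqrt 2)) / 2 := by
          simp only [smul_eq_mul]; ring
  refine ⟨βm, ⟨⟨hβmpos, hβmsum⟩, fun β' hb' => hmain β' hb'.1 hb'.2⟩, ?_⟩
  -- uniqueness
  intro β' hβ'
  obtain ⟨⟨hpos', hsum'⟩, hmin'⟩ := hβ'
  by_contra hneq
  obtain ⟨i₀, hi₀⟩ := Function.ne_iff.mp hneq
  have h1 : g βm ≤ g β' := hmain β' hpos' hsum'
  have h2' : g β' ≤ g βm := hmin' βm ⟨hβmpos, hβmsum⟩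
  set γ : Fin n → ℝ := fun i => (β' i + βm i) / 2 with hγdef
  have hγpos : ∀ i, 0 < γ i := by
    intro i
    have := hpos' i; have := hβmpos i
    rw [hγdef]
    dsimp only
    linarith
  have hγsum : ∑ i, γ i * σ i * Real.sqrt c = S := by
    have h3 : ∀ i, γ i * σ i * Real.sqrt c
        = (β' i * σ i * Real.sqrt c + βm i * σ i * Real.sqrt c) / 2 := by
      intro i; rw [hγdef]; dsimp only; ring
    rw [Finset.sum_congr rfl fun i _ => h3 i, ← Finset.sum_div,
      Finset.sum_add_distrib, hsum', hβmsum]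
    ring
  have hterm_le : ∀ i, w i * G₀ (γ i / Real.sqrt 2) ≤
      (w i * G₀ (β' i / Real.sqrt 2) + w i * G₀ (βm i / Real.sqrt 2)) / 2 := by
    intro i
    by_cases h : β' i = βm i
    · have hγi : γ i = β' i := by rw [hγdef]; dsimp only; rw [h]; ring
      rw [hγi, h]
      linarith
    · have hk := key _ _ (hpos' i) (hβmpos i) h
      have := mul_lt_mul_of_pos_left hk (hwpos i)
      have e : w i * ((G₀ (β' i / Real.sqrt 2) + G₀ (βm i / Real.sqrt 2)) / 2)
          = (w i * G₀ (β' i / Real.sqrt 2) + w i * G₀ (βm i / Real.sqrt 2)) / 2 := by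
        ring
      have hγi : γ i = (β' i + βm i) / 2 := by rw [hγdef]
      rw [hγi]
      exact (this.trans_eq e).le
  have hterm_lt : w i₀ * G₀ (γ i₀ / Real.sqrt 2) <
      (w i₀ * G₀ (β' i₀ / Real.sqrt 2) + w i₀ * G₀ (βm i₀ / Real.sqrt 2)) / 2 := by
    have hk := key _ _ (hpos' i₀) (hβmpos i₀) hi₀
    have := mul_lt_mul_of_pos_left hk (hwpos i₀)
    have e : w i₀ * ((G₀ (β' i₀ / Real.sqrt 2) + G₀ (βm i₀ / Real.sqrt 2)) / 2)
        = (w i₀ * G₀ (β' i₀ / Real.sqrt 2) + w i₀ * G₀ (βm i₀ / Real.sqrt 2)) / 2 := by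
      ring
    have hγi : γ i₀ = (β' i₀ + βm i₀) / 2 := by rw [hγdef]
    rw [hγi]
    exact this.trans_eq e
  have hsum_lt : g γ < (g β' + g βm) / 2 := by
    rw [hgdef]
    calc (∑ i, w i * G₀ (γ i / Real.sqrt 2))
        < ∑ i, (w i * G₀ (β' i / Real.sqrt 2) + w i * G₀ (βm i / Real.sqrt 2)) / 2 :=
          Finset.sum_lt_sum (fun i _ => hterm_le i) ⟨i₀, Finset.mem_univ _, hterm_lt⟩
      _ = ((∑ i, w i * G₀ (β' i / Real.sqrt 2))
            + ∑ i, w i * G₀ (βm i / Real.sqrt 2)) / 2 := by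
          rw [← Finset.sum_div, Finset.sum_add_distrib]
  have hγge : g βm ≤ g γ := hmain γ hγpos hγsum
  have heq : g β' = g βm := le_antisymm h2' h1
  rw [heq] at hsum_lt
  linarith
end

section
/- For b > 0 the function G₀'(b) = -√π · Σ_{k=0}^∞ ∫_{b√(k+1)}^∞ e^{-t²} dt is negative and strictly increasing in b. -/
open MeasureTheory Set Real

private lemma hInt : Integrable (fun x : ℝ => Real.exp (-x^2)) := by
  have := integrable_exp_neg_mul_sq (one_pos (α := ℝ))
  simpa using this

private lemma hInt2 : Integrable (fun x : ℝ => Real.exp (-(1/2) * x^2)) :=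
  integrable_exp_neg_mul_sq (by norm_num)

private lemma hsupp : Function.support (fun t : ℝ => Real.exp (-t^2)) = Set.univ := by
  ext t; simp [Real.exp_ne_zero]

private lemma hpos (c : ℝ) : 0 < ∫ t in Ioi c, Real.exp (-t^2) := by
  rw [setIntegral_pos_iff_support_of_nonneg_ae
    (Filter.Eventually.of_forall fun t => (Real.exp_pos _).le) hInt.integrableOn]
  rw [hsupp, Set.univ_inter]
  simp

private lemma hstrict {a c : ℝ} (h : a < c) :
    (∫ t in Ioi c, Real.exp (-t^2)) < ∫ t in Ioi a, Real.exp (-t^2) := by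
  have hIoc : 0 < ∫ t in Ioc a c, Real.exp (-t^2) := by
    rw [setIntegral_pos_iff_support_of_nonneg_ae
      (Filter.Eventually.of_forall fun t => (Real.exp_pos _).le) hInt.integrableOn]
    rw [hsupp, Set.univ_inter]
    simp [h]
  have hsplit : (∫ t in Ioi a, Real.exp (-t^2))
      = (∫ t in Ioc a c, Real.exp (-t^2)) + ∫ t in Ioi c, Real.exp (-t^2) := by
    rw [← setIntegral_union (Set.Ioc_disjoint_Ioi le_rfl) measurableSet_Ioi
      hInt.integrableOn hInt.integrableOn, Set.Ioc_union_Ioi_eq_Ioi h.le]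
  linarith

private lemma hsummable {b : ℝ} (hb : 0 < b) :
    Summable (fun k : ℕ => ∫ t in Set.Ioi (b * Real.sqrt (k + 1)), Real.exp (-t ^ 2)) := by
  set C : ℝ := ∫ t : ℝ, Real.exp (-(1/2) * t^2) with hC
  set r : ℝ := Real.exp (-(1/2) * b^2) with hr
  have hr0 : 0 < r := Real.exp_pos _
  have hr1 : r < 1 := by
    rw [hr, Real.exp_lt_one_iff]
    nlinarith
  have hC0 : 0 ≤ C := integral_nonneg fun t => (Real.exp_pos _).le
  apply Summable.of_nonneg_of_le (fun k => integral_nonneg fun t => (Real.exp_pos _).le)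
    (f := fun k => C * r ^ (k+1))
  · intro k
    set c : ℝ := b * Real.sqrt (k + 1) with hc
    have hc0 : 0 < c := mul_pos hb (Real.sqrt_pos.2 (by positivity))
    have hcsq : c ^ 2 = b ^ 2 * (k + 1) := by
      rw [hc, mul_pow, Real.sq_sqrt (by positivity)]
    have h1 : (∫ t in Ioi c, Real.exp (-t^2))
        ≤ ∫ t in Ioi c, Real.exp (-(1/2) * c^2) * Real.exp (-(1/2) * t^2) := by
      apply setIntegral_mono_on hInt.integrableOn
        ((hInt2.const_mul _).integrableOn) measurableSet_Ioi
      intro t ht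
      rw [← Real.exp_add]
      apply Real.exp_le_exp.2
      have : c ≤ t := (Set.mem_Ioi.1 ht).le
      nlinarith
    have h2 : (∫ t in Ioi c, Real.exp (-(1/2) * c^2) * Real.exp (-(1/2) * t^2))
        = Real.exp (-(1/2) * c^2) * ∫ t in Ioi c, Real.exp (-(1/2) * t^2) := by
      rw [integral_const_mul]
    have h3 : (∫ t in Ioi c, Real.exp (-(1/2) * t^2)) ≤ C :=
      setIntegral_le_integral hInt2 (Filter.Eventually.of_forall fun t => (Real.exp_pos _).le)
    have h4 : Real.exp (-(1/2) * c^2) = r ^ (k+1) := by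
      rw [hr, ← Real.exp_nat_mul]
      congr 1
      rw [hcsq]
      push_cast
      ring
    calc (∫ t in Ioi c, Real.exp (-t^2)) ≤ _ := h1
      _ = Real.exp (-(1/2) * c^2) * ∫ t in Ioi c, Real.exp (-(1/2) * t^2) := h2
      _ ≤ Real.exp (-(1/2) * c^2) * C := by
          exact mul_le_mul_of_nonneg_left h3 (Real.exp_pos _).le
      _ = C * r ^ (k+1) := by rw [h4]; ring
  · have : Summable (fun k : ℕ => (C * r) * r ^ k) :=
      (summable_geometric_of_lt_one hr0.le hr1).mul_left _
    convert this using 2 with k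
    ring

theorem stmt8 (F : ℝ → ℝ)
    (hF : ∀ b : ℝ, F b = -Real.sqrt Real.pi *
      ∑' k : ℕ, ∫ t in Set.Ioi (b * Real.sqrt (k + 1)), Real.exp (-t ^ 2)) :
    (∀ b : ℝ, 0 < b →
      Summable (fun k : ℕ => ∫ t in Set.Ioi (b * Real.sqrt (k + 1)), Real.exp (-t ^ 2))) ∧
    (∀ b : ℝ, 0 < b → F b < 0) ∧
    StrictMonoOn F (Set.Ioi 0) := by
  have hsπ : 0 < Real.sqrt Real.pi := Real.sqrt_pos.2 Real.pi_pos
  refine ⟨fun b hb => hsummable hb, ?_, ?_⟩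
  · intro b hb
    have hS : 0 < ∑' k : ℕ, ∫ t in Set.Ioi (b * Real.sqrt (k + 1)), Real.exp (-t ^ 2) :=
      Summable.tsum_pos (hsummable hb) (fun k => le_of_lt (hpos _)) 0 (hpos _)
    rw [hF b]
    nlinarith
  · intro a ha b hb hab
    simp only [Set.mem_Ioi] at ha hb
    have hlt : (∑' k : ℕ, ∫ t in Set.Ioi (b * Real.sqrt (k + 1)), Real.exp (-t ^ 2))
        < ∑' k : ℕ, ∫ t in Set.Ioi (a * Real.sqrt (k + 1)), Real.exp (-t ^ 2) := by
      apply Summable.tsum_lt_tsum (i := 0) ?_ ?_ (hsummable hb) (hsummable ha)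
      · intro k
        exact (hstrict (mul_lt_mul_of_pos_right hab (Real.sqrt_pos.2 (by positivity)))).le
      · exact hstrict (mul_lt_mul_of_pos_right hab (Real.sqrt_pos.2 (by norm_num)))
    rw [hF a, hF b]
    nlinarith
end

section
/- Let Y : ℂ → ℂ be analytic on |v - 1| < δ with power series Y(v) = 1 + μ(v-1) + Σ_{k≥2} c_k (v-1)^k. Then for |z-1|, |w-1| ≤ δ' < δ, zY(w) - wY(z) = (1-μ)(z-w) + Σ_{k≥2} c_k (z(w-1)^k - w(z-1)^k), and there is a constant C (depending only on Y and δ') such that |zY(w) - wY(z) - (1-μ)(z-w)| ≤ C |z-w| (|z-1| + |w-1|). -/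
set_option maxHeartbeats 1000000

open Finset

/-- Bound on `b^(k+2) - a^(k+2)` when `‖a‖, ‖b‖ ≤ δ'`. -/
lemma pow_sub_pow_bound (δ' : ℝ) (hδ' : 0 < δ') (a b : ℂ)
    (ha : ‖a‖ ≤ δ') (hb : ‖b‖ ≤ δ') (k : ℕ) :
    ‖b ^ (k + 2) - a ^ (k + 2)‖ ≤ ‖b - a‖ * ((k + 2) * δ' ^ k * (‖a‖ + ‖b‖)) := by
  have h := geom_sum₂_mul b a (k + 2)
  rw [← h, norm_mul]
  have hbound : ‖∑ i ∈ range (k + 2), b ^ i * a ^ (k + 2 - 1 - i)‖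
      ≤ (k + 2) * δ' ^ k * (‖a‖ + ‖b‖) := by
    calc ‖∑ i ∈ range (k + 2), b ^ i * a ^ (k + 2 - 1 - i)‖
        ≤ ∑ i ∈ range (k + 2), ‖b ^ i * a ^ (k + 2 - 1 - i)‖ := norm_sum_le _ _
      _ ≤ ∑ _i ∈ range (k + 2), δ' ^ k * (‖a‖ + ‖b‖) := by
          apply Finset.sum_le_sum
          intro i hi
          rw [Finset.mem_range] at hi
          rw [norm_mul, norm_pow, norm_pow]
          rcases Nat.eq_zero_or_pos i with h0 | hpos
          · subst h0
            simp only [pow_zero, one_mul]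
            have hk1 : k + 2 - 1 - 0 = k + 1 := by omega
            rw [hk1, pow_succ']
            have h2 : ‖a‖ ^ k ≤ δ' ^ k := pow_le_pow_left₀ (norm_nonneg a) ha k
            nlinarith [norm_nonneg a, norm_nonneg b, pow_nonneg (norm_nonneg a) k,
              pow_nonneg hδ'.le k]
          · have hi1 : 1 ≤ i := hpos
            have : ‖b‖ ^ i = ‖b‖ * ‖b‖ ^ (i - 1) := by
              rw [← pow_succ']
              congr 1
              omega
            rw [this]
            have h2 : ‖b‖ ^ (i - 1) ≤ δ' ^ (i - 1) := pow_le_pow_left₀ (norm_nonneg b) hb _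
            have h3 : ‖a‖ ^ (k + 2 - 1 - i) ≤ δ' ^ (k + 2 - 1 - i) :=
              pow_le_pow_left₀ (norm_nonneg a) ha _
            have h4 : δ' ^ (i - 1) * δ' ^ (k + 2 - 1 - i) = δ' ^ k := by
              rw [← pow_add]
              congr 1
              omega
            calc ‖b‖ * ‖b‖ ^ (i - 1) * ‖a‖ ^ (k + 2 - 1 - i)
                ≤ ‖b‖ * (δ' ^ (i - 1) * δ' ^ (k + 2 - 1 - i)) := by
                  have := mul_le_mul h2 h3 (pow_nonneg (norm_nonneg a) _)
                    (pow_nonneg hδ'.le _)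
                  rw [mul_assoc]
                  exact mul_le_mul_of_nonneg_left this (norm_nonneg b)
              _ = δ' ^ k * ‖b‖ := by rw [h4]; ring
              _ ≤ δ' ^ k * (‖a‖ + ‖b‖) := by
                  apply mul_le_mul_of_nonneg_left _ (pow_nonneg hδ'.le k)
                  linarith [norm_nonneg a]
      _ = (k + 2) * (δ' ^ k * (‖a‖ + ‖b‖)) := by
          rw [Finset.sum_const, Finset.card_range]
          push_cast
          ring
      _ = (k + 2) * δ' ^ k * (‖a‖ + ‖b‖) := by ring
  calc ‖∑ i ∈ range (k + 2), b ^ i * a ^ (k + 2 - 1 - i)‖ * ‖b - a‖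
      ≤ ((k + 2) * δ' ^ k * (‖a‖ + ‖b‖)) * ‖b - a‖ :=
        mul_le_mul_of_nonneg_right hbound (norm_nonneg _)
    _ = ‖b - a‖ * ((k + 2) * δ' ^ k * (‖a‖ + ‖b‖)) := by ring

theorem stmt9 (Y : ℂ → ℂ) (μ : ℂ) (δ δ' : ℝ) (hδ' : 0 < δ') (hδ : δ' < δ)
    (cf : ℕ → ℂ) (hc0 : cf 0 = 1) (hc1 : cf 1 = μ)
    (hY : ∀ v : ℂ, ‖v - 1‖ < δ → Y v = ∑' k : ℕ, cf k * (v - 1) ^ k)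
    (hsum : Summable (fun k : ℕ => (k : ℝ) * ‖cf k‖ * δ' ^ k)) :
    (∀ z w : ℂ, ‖z - 1‖ ≤ δ' → ‖w - 1‖ ≤ δ' →
      z * Y w - w * Y z = (1 - μ) * (z - w) +
        ∑' k : ℕ, cf (k + 2) * (z * (w - 1) ^ (k + 2) - w * (z - 1) ^ (k + 2))) ∧
    ∃ C : ℝ, ∀ z w : ℂ, ‖z - 1‖ ≤ δ' → ‖w - 1‖ ≤ δ' →
      ‖z * Y w - w * Y z - (1 - μ) * (z - w)‖ ≤
        C * ‖z - w‖ * (‖z - 1‖ + ‖w - 1‖) := by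
  -- summability of the coefficient series
  have hsum1 : Summable (fun k : ℕ => ‖cf k‖ * δ' ^ k) := by
    rw [← summable_nat_add_iff 1]
    apply Summable.of_nonneg_of_le (fun k => by positivity) (fun k => ?_)
      ((summable_nat_add_iff 1).2 hsum)
    have h1 : (1 : ℝ) ≤ ((k + 1 : ℕ) : ℝ) := by exact_mod_cast Nat.one_le_iff_ne_zero.2 (by omega)
    nlinarith [norm_nonneg (cf (k + 1)), pow_nonneg hδ'.le (k + 1),
      mul_nonneg (norm_nonneg (cf (k + 1))) (pow_nonneg hδ'.le (k + 1))]
  have hs : ∀ x : ℂ, ‖x‖ ≤ δ' → Summable (fun k : ℕ => cf k * x ^ k) := by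
    intro x hx
    apply Summable.of_norm
    apply Summable.of_nonneg_of_le (fun k => norm_nonneg _) (fun k => ?_) hsum1
    rw [norm_mul, norm_pow]
    gcongr
  -- the key identity
  have key : ∀ z w : ℂ, ‖z - 1‖ ≤ δ' → ‖w - 1‖ ≤ δ' →
      z * Y w - w * Y z = (1 - μ) * (z - w) +
        ∑' k : ℕ, cf (k + 2) * (z * (w - 1) ^ (k + 2) - w * (z - 1) ^ (k + 2)) := by
    intro z w hz hw
    have hgz := hs (z - 1) hz
    have hgw := hs (w - 1) hw
    rw [hY z (hz.trans_lt hδ), hY w (hw.trans_lt hδ)]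
    have hg : Summable (fun k : ℕ => cf k * (z * (w - 1) ^ k - w * (z - 1) ^ k)) :=
      ((hgw.mul_left z).sub (hgz.mul_left w)).congr (fun k => by ring)
    have h1 : z * (∑' k : ℕ, cf k * (w - 1) ^ k) - w * (∑' k : ℕ, cf k * (z - 1) ^ k)
        = ∑' k : ℕ, cf k * (z * (w - 1) ^ k - w * (z - 1) ^ k) := by
      rw [← tsum_mul_left, ← tsum_mul_left,
        ← Summable.tsum_sub (hgw.mul_left z) (hgz.mul_left w)]
      exact tsum_congr (fun k => by ring)
    rw [h1, ← Summable.sum_add_tsum_nat_add 2 hg]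
    congr 1
    simp only [Finset.sum_range_succ, Finset.sum_range_zero, zero_add, pow_zero, pow_one,
      hc0, hc1]
    ring
  refine ⟨key, ?_⟩
  -- summability of the tail coefficient series
  have hS : Summable (fun k : ℕ => ((k + 2 : ℕ) : ℝ) * ‖cf (k + 2)‖ * δ' ^ (k + 2)) :=
    (summable_nat_add_iff 2).2 hsum
  have hT : Summable (fun k : ℕ => ((k : ℝ) + 2) * ‖cf (k + 2)‖ * (1 + 2 * δ') * δ' ^ k) := by
    have hne : δ' ≠ 0 := ne_of_gt hδ'
    apply (hS.mul_left ((1 + 2 * δ') / δ' ^ 2)).congr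
    intro k
    push_cast
    field_simp
    ring
  set C : ℝ := ∑' k : ℕ, ((k : ℝ) + 2) * ‖cf (k + 2)‖ * (1 + 2 * δ') * δ' ^ k with hC
  refine ⟨C, ?_⟩
  intro z w hz hw
  rw [key z w hz hw]
  rw [add_sub_cancel_left]
  -- now bound the tail
  have hgz := hs (z - 1) hz
  have hgw := hs (w - 1) hw
  have hg : Summable (fun k : ℕ => cf k * (z * (w - 1) ^ k - w * (z - 1) ^ k)) :=
    ((hgw.mul_left z).sub (hgz.mul_left w)).congr (fun k => by ring)
  have hg2 : Summable (fun k : ℕ =>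
      cf (k + 2) * (z * (w - 1) ^ (k + 2) - w * (z - 1) ^ (k + 2))) :=
    (summable_nat_add_iff 2).2 hg
  set M : ℝ := ‖z - w‖ * (‖z - 1‖ + ‖w - 1‖) with hM
  have hzn : ‖z‖ ≤ 1 + δ' := by
    calc ‖z‖ = ‖(z - 1) + 1‖ := by ring_nf
      _ ≤ ‖z - 1‖ + ‖(1 : ℂ)‖ := norm_add_le _ _
      _ ≤ δ' + 1 := by rw [norm_one]; linarith
      _ = 1 + δ' := by ring
  have hterm : ∀ k : ℕ,
      ‖cf (k + 2) * (z * (w - 1) ^ (k + 2) - w * (z - 1) ^ (k + 2))‖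
        ≤ ((k : ℝ) + 2) * ‖cf (k + 2)‖ * (1 + 2 * δ') * δ' ^ k * M := by
    intro k
    rw [norm_mul]
    have hsplit : z * (w - 1) ^ (k + 2) - w * (z - 1) ^ (k + 2)
        = z * ((w - 1) ^ (k + 2) - (z - 1) ^ (k + 2)) + (z - w) * (z - 1) ^ (k + 2) := by
      ring
    rw [hsplit]
    have hba : ‖(w - 1) - (z - 1)‖ = ‖z - w‖ := by
      rw [show (w - 1) - (z - 1) = -(z - w) by ring, norm_neg]
    have hb1 : ‖z * ((w - 1) ^ (k + 2) - (z - 1) ^ (k + 2))‖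
        ≤ (1 + δ') * (‖z - w‖ * ((k + 2) * δ' ^ k * (‖z - 1‖ + ‖w - 1‖))) := by
      rw [norm_mul]
      have := pow_sub_pow_bound δ' hδ' (z - 1) (w - 1) hz hw k
      rw [hba] at this
      apply mul_le_mul hzn this (norm_nonneg _) (by linarith)
    have hb2 : ‖(z - w) * (z - 1) ^ (k + 2)‖
        ≤ ‖z - w‖ * (δ' * δ' ^ k * (‖z - 1‖ + ‖w - 1‖)) := by
      rw [norm_mul, norm_pow]
      apply mul_le_mul_of_nonneg_left _ (norm_nonneg _)
      have h1 : ‖z - 1‖ ^ (k + 2) = ‖z - 1‖ * ‖z - 1‖ ^ (k + 1) := by rw [← pow_succ']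
      rw [h1]
      have h2 : ‖z - 1‖ ^ (k + 1) ≤ δ' ^ (k + 1) := pow_le_pow_left₀ (norm_nonneg _) hz _
      calc ‖z - 1‖ * ‖z - 1‖ ^ (k + 1) ≤ ‖z - 1‖ * δ' ^ (k + 1) :=
            mul_le_mul_of_nonneg_left h2 (norm_nonneg _)
        _ = δ' * δ' ^ k * ‖z - 1‖ := by rw [pow_succ']; ring
        _ ≤ δ' * δ' ^ k * (‖z - 1‖ + ‖w - 1‖) := by
            apply mul_le_mul_of_nonneg_left _ (by positivity)
            linarith [norm_nonneg (w - 1)]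
    calc ‖cf (k + 2)‖ * ‖z * ((w - 1) ^ (k + 2) - (z - 1) ^ (k + 2)) + (z - w) * (z - 1) ^ (k + 2)‖
        ≤ ‖cf (k + 2)‖ * ((1 + δ') * (‖z - w‖ * ((k + 2) * δ' ^ k * (‖z - 1‖ + ‖w - 1‖)))
            + ‖z - w‖ * (δ' * δ' ^ k * (‖z - 1‖ + ‖w - 1‖))) := by
          apply mul_le_mul_of_nonneg_left _ (norm_nonneg _)
          calc ‖z * ((w - 1) ^ (k + 2) - (z - 1) ^ (k + 2)) + (z - w) * (z - 1) ^ (k + 2)‖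
              ≤ ‖z * ((w - 1) ^ (k + 2) - (z - 1) ^ (k + 2))‖ + ‖(z - w) * (z - 1) ^ (k + 2)‖ :=
                norm_add_le _ _
            _ ≤ _ := add_le_add hb1 hb2
      _ = ((1 + δ') * ((k : ℝ) + 2) + δ') *
            (‖cf (k + 2)‖ * δ' ^ k * (‖z - w‖ * (‖z - 1‖ + ‖w - 1‖))) := by ring
      _ ≤ ((1 + 2 * δ') * ((k : ℝ) + 2)) *
            (‖cf (k + 2)‖ * δ' ^ k * (‖z - w‖ * (‖z - 1‖ + ‖w - 1‖))) := by
          apply mul_le_mul_of_nonneg_right _ (by positivity)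
          nlinarith [mul_nonneg hδ'.le (Nat.cast_nonneg k : (0 : ℝ) ≤ (k : ℝ))]
      _ = ((k : ℝ) + 2) * ‖cf (k + 2)‖ * (1 + 2 * δ') * δ' ^ k * M := by rw [hM]; ring
  calc ‖∑' k : ℕ, cf (k + 2) * (z * (w - 1) ^ (k + 2) - w * (z - 1) ^ (k + 2))‖
      ≤ ∑' k : ℕ, ‖cf (k + 2) * (z * (w - 1) ^ (k + 2) - w * (z - 1) ^ (k + 2))‖ :=
        norm_tsum_le_tsum_norm hg2.norm
    _ ≤ ∑' k : ℕ, ((k : ℝ) + 2) * ‖cf (k + 2)‖ * (1 + 2 * δ') * δ' ^ k * M :=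
        Summable.tsum_le_tsum hterm hg2.norm (hT.mul_right M)
    _ = C * M := by rw [tsum_mul_right, hC]
    _ = C * ‖z - w‖ * (‖z - 1‖ + ‖w - 1‖) := by rw [hM]; ring
end

section
/- For every b > 0, G₃(b) + G₄(b) = G₂(b)/(2b²), where G₂(b) = ∫₀^∞ (b²/(b²+t²)) e^{-b²-t²}/(1-e^{-b²-t²}) dt, G₃(b) = ∫₀^∞ (t²/(b²+t²)²) e^{-b²-t²}/(1-e^{-b²-t²}) dt, and G₄(b) = ∫₀^∞ (t²/(b²+t²)) e^{-b²-t²}/(1-e^{-b²-t²})² dt. -/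
open MeasureTheory Real Set Filter

-- helper: integrability of continuous functions dominated by C * exp(-t^2)
lemma aux_integrable (h : ℝ → ℝ) (hcont : Continuous h) (C : ℝ)
    (hbd : ∀ t, |h t| ≤ C * Real.exp (-t ^ 2)) : IntegrableOn h (Set.Ioi 0) := by
  have hint : Integrable (fun t : ℝ => C * Real.exp (-t ^ 2)) := by
    have := (integrable_exp_neg_mul_sq (one_pos : (0:ℝ) < 1)).const_mul C
    simpa using this
  refine hint.integrableOn.mono' hcont.aestronglyMeasurable.restrict ?_
  filter_upwards with t using by simpa [Real.norm_eq_abs] using hbd t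

lemma aux_frac (b t : ℝ) (hb : 0 < b) :
    b ^ 2 / (b ^ 2 + t ^ 2) ^ 2 + t ^ 2 / (b ^ 2 + t ^ 2) ^ 2
      = 1 / b ^ 2 * (b ^ 2 / (b ^ 2 + t ^ 2)) := by
  have h1 : (0:ℝ) < b ^ 2 + t ^ 2 := by positivity
  field_simp

theorem stmt17 (b : ℝ) (hb : 0 < b) :
    (∫ t in Set.Ioi (0 : ℝ), t ^ 2 / (b ^ 2 + t ^ 2) ^ 2 *
        (Real.exp (-b ^ 2 - t ^ 2) / (1 - Real.exp (-b ^ 2 - t ^ 2)))) +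
      (∫ t in Set.Ioi (0 : ℝ), t ^ 2 / (b ^ 2 + t ^ 2) *
        (Real.exp (-b ^ 2 - t ^ 2) / (1 - Real.exp (-b ^ 2 - t ^ 2)) ^ 2)) =
    (∫ t in Set.Ioi (0 : ℝ), b ^ 2 / (b ^ 2 + t ^ 2) *
        (Real.exp (-b ^ 2 - t ^ 2) / (1 - Real.exp (-b ^ 2 - t ^ 2)))) / (2 * b ^ 2) := by
  have hb2 : (0:ℝ) < b ^ 2 := by positivity
  set c : ℝ := 1 - Real.exp (-b ^ 2) with hcdef
  have hc : 0 < c := by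
    have : Real.exp (-b ^ 2) < 1 := Real.exp_lt_one_iff.mpr (by nlinarith)
    simp only [hcdef]; linarith
  set E : ℝ → ℝ := fun t => Real.exp (-b ^ 2 - t ^ 2) with hEdef
  have hEsplit : ∀ t : ℝ, E t = Real.exp (-b ^ 2) * Real.exp (-t ^ 2) := by
    intro t; rw [hEdef, ← Real.exp_add]; ring_nf
  have hEpos : ∀ t : ℝ, 0 < E t := fun t => Real.exp_pos _
  have hden : ∀ t : ℝ, c ≤ 1 - E t := by
    intro t
    have : E t ≤ Real.exp (-b ^ 2) := Real.exp_le_exp.mpr (by nlinarith)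
    simp only [hcdef]; linarith
  have hdpos : ∀ t : ℝ, 0 < 1 - E t := fun t => lt_of_lt_of_le hc (hden t)
  have hsum : ∀ t : ℝ, 0 < b ^ 2 + t ^ 2 := fun t => by positivity
  -- the four integrand functions
  set h1 : ℝ → ℝ := fun t => t ^ 2 / (b ^ 2 + t ^ 2) ^ 2 * (E t / (1 - E t)) with h1def
  set h2 : ℝ → ℝ := fun t => t ^ 2 / (b ^ 2 + t ^ 2) * (E t / (1 - E t) ^ 2) with h2def
  set h3 : ℝ → ℝ := fun t => b ^ 2 / (b ^ 2 + t ^ 2) * (E t / (1 - E t)) with h3def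
  set h4 : ℝ → ℝ := fun t => b ^ 2 / (b ^ 2 + t ^ 2) ^ 2 * (E t / (1 - E t)) with h4def
  have hEcont : Continuous E := by fun_prop
  have hfcont : Continuous (fun t => E t / (1 - E t)) :=
    hEcont.div (by fun_prop) (fun t => (hdpos t).ne')
  have hf2cont : Continuous (fun t => E t / (1 - E t) ^ 2) :=
    hEcont.div (by fun_prop) (fun t => (pow_pos (hdpos t) 2).ne')
  have hEbound : ∀ t : ℝ, E t / (1 - E t) ≤ (Real.exp (-b ^ 2) / c) * Real.exp (-t ^ 2) := by
    intro t
    have : E t / (1 - E t) ≤ E t / c := by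
      gcongr
      exact hden t
    calc E t / (1 - E t) ≤ E t / c := this
      _ = (Real.exp (-b ^ 2) / c) * Real.exp (-t ^ 2) := by rw [hEsplit t]; ring
  have hEbound2 : ∀ t : ℝ, E t / (1 - E t) ^ 2 ≤ (Real.exp (-b ^ 2) / c ^ 2) * Real.exp (-t ^ 2) := by
    intro t
    have : E t / (1 - E t) ^ 2 ≤ E t / c ^ 2 := by
      gcongr
      exact hden t
    calc E t / (1 - E t) ^ 2 ≤ E t / c ^ 2 := this
      _ = (Real.exp (-b ^ 2) / c ^ 2) * Real.exp (-t ^ 2) := by rw [hEsplit t]; ring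
  -- integrability
  have I1 : IntegrableOn h1 (Set.Ioi 0) := by
    apply aux_integrable h1 (by fun_prop (disch := intro t; positivity)) (1 / b ^ 2 * (Real.exp (-b ^ 2) / c))
    intro t
    have hnn : 0 ≤ h1 t := by
      apply mul_nonneg (by positivity)
      exact div_nonneg (hEpos t).le (hdpos t).le
    rw [abs_of_nonneg hnn, h1def]
    have hq : t ^ 2 / (b ^ 2 + t ^ 2) ^ 2 ≤ 1 / b ^ 2 := by
      rw [div_le_div_iff₀ (by positivity) hb2]
      nlinarith [sq_nonneg t, sq_nonneg (t^2)]
    calc t ^ 2 / (b ^ 2 + t ^ 2) ^ 2 * (E t / (1 - E t))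
        ≤ (1 / b ^ 2) * ((Real.exp (-b ^ 2) / c) * Real.exp (-t ^ 2)) := by
          apply mul_le_mul hq (hEbound t) (div_nonneg (hEpos t).le (hdpos t).le) (by positivity)
      _ = 1 / b ^ 2 * (Real.exp (-b ^ 2) / c) * Real.exp (-t ^ 2) := by ring
  have I2 : IntegrableOn h2 (Set.Ioi 0) := by
    apply aux_integrable h2 (by fun_prop (disch := intro t; positivity)) (Real.exp (-b ^ 2) / c ^ 2)
    intro t
    have hnn : 0 ≤ h2 t := by
      apply mul_nonneg (by positivity)
      exact div_nonneg (hEpos t).le (pow_pos (hdpos t) 2).le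
    rw [abs_of_nonneg hnn, h2def]
    have hq : t ^ 2 / (b ^ 2 + t ^ 2) ≤ 1 := by
      rw [div_le_one (hsum t)]; nlinarith
    calc t ^ 2 / (b ^ 2 + t ^ 2) * (E t / (1 - E t) ^ 2)
        ≤ 1 * ((Real.exp (-b ^ 2) / c ^ 2) * Real.exp (-t ^ 2)) := by
          apply mul_le_mul hq (hEbound2 t) (div_nonneg (hEpos t).le (pow_pos (hdpos t) 2).le) (by positivity)
      _ = Real.exp (-b ^ 2) / c ^ 2 * Real.exp (-t ^ 2) := by ring
  have I3 : IntegrableOn h3 (Set.Ioi 0) := by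
    apply aux_integrable h3 (by fun_prop (disch := intro t; positivity)) (Real.exp (-b ^ 2) / c)
    intro t
    have hnn : 0 ≤ h3 t := by
      apply mul_nonneg (by positivity)
      exact div_nonneg (hEpos t).le (hdpos t).le
    rw [abs_of_nonneg hnn, h3def]
    have hq : b ^ 2 / (b ^ 2 + t ^ 2) ≤ 1 := by
      rw [div_le_one (hsum t)]; nlinarith
    calc b ^ 2 / (b ^ 2 + t ^ 2) * (E t / (1 - E t))
        ≤ 1 * ((Real.exp (-b ^ 2) / c) * Real.exp (-t ^ 2)) := by
          apply mul_le_mul hq (hEbound t) (div_nonneg (hEpos t).le (hdpos t).le) (by positivity)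
      _ = Real.exp (-b ^ 2) / c * Real.exp (-t ^ 2) := by ring
  have I4 : IntegrableOn h4 (Set.Ioi 0) := by
    apply aux_integrable h4 (by fun_prop (disch := intro t; positivity)) (1 / b ^ 2 * (Real.exp (-b ^ 2) / c))
    intro t
    have hnn : 0 ≤ h4 t := by
      apply mul_nonneg (by positivity)
      exact div_nonneg (hEpos t).le (hdpos t).le
    rw [abs_of_nonneg hnn, h4def]
    have hq : b ^ 2 / (b ^ 2 + t ^ 2) ^ 2 ≤ 1 / b ^ 2 := by
      rw [div_le_div_iff₀ (by positivity) hb2]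
      nlinarith [sq_nonneg t, sq_nonneg (t ^ 2)]
    calc b ^ 2 / (b ^ 2 + t ^ 2) ^ 2 * (E t / (1 - E t))
        ≤ (1 / b ^ 2) * ((Real.exp (-b ^ 2) / c) * Real.exp (-t ^ 2)) := by
          apply mul_le_mul hq (hEbound t) (div_nonneg (hEpos t).le (hdpos t).le) (by positivity)
      _ = 1 / b ^ 2 * (Real.exp (-b ^ 2) / c) * Real.exp (-t ^ 2) := by ring
  -- the boundary function g and its derivative
  set g : ℝ → ℝ := fun t => t / (b ^ 2 + t ^ 2) * (E t / (1 - E t)) with hgdef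
  have hderiv : ∀ t : ℝ, HasDerivAt g (h4 t - h1 t - 2 * h2 t) t := by
    intro t
    have hE' : HasDerivAt E (-2 * t * E t) t := by
      have h0 : HasDerivAt (fun t : ℝ => -b ^ 2 - t ^ 2) (-(2 * t)) t := by
        have := (hasDerivAt_pow 2 t).const_sub (-b ^ 2)
        exact this.congr_deriv (by ring)
      have := h0.exp
      simpa [hEdef, mul_comm] using this.congr_deriv (by ring)
    have hq : HasDerivAt (fun t => t / (b ^ 2 + t ^ 2)) ((b ^ 2 - t ^ 2) / (b ^ 2 + t ^ 2) ^ 2) t := by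
      have hnum : HasDerivAt (fun t : ℝ => t) 1 t := hasDerivAt_id t
      have hden' : HasDerivAt (fun t : ℝ => b ^ 2 + t ^ 2) (2 * t) t := by
        simpa using (hasDerivAt_pow 2 t).const_add (b ^ 2)
      have := hnum.div hden' (hsum t).ne'
      exact this.congr_deriv (by ring)
    have hf' : HasDerivAt (fun t => E t / (1 - E t)) (-2 * t * E t / (1 - E t) ^ 2) t := by
      have hd : HasDerivAt (fun t => 1 - E t) (2 * t * E t) t := by
        simpa using (hE'.const_sub 1).congr_deriv (by ring)
      have := hE'.div hd (hdpos t).ne'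
      exact this.congr_deriv (by ring)
    have := hq.mul hf'
    refine this.congr_deriv ?_
    rw [h4def, h1def, h2def]
    ring
  -- g tends to 0 at infinity
  have hgtend : Tendsto g atTop (nhds 0) := by
    have hlim : Tendsto (fun t : ℝ => (1 / b * (Real.exp (-b ^ 2) / c)) * Real.exp (-t ^ 2)) atTop (nhds 0) := by
      have h1t : Tendsto (fun t : ℝ => Real.exp (-t ^ 2)) atTop (nhds 0) := by
        have : Tendsto (fun t : ℝ => t ^ 2) atTop atTop := tendsto_pow_atTop two_ne_zero
        exact Real.tendsto_exp_neg_atTop_nhds_zero.comp this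
      simpa using h1t.const_mul (1 / b * (Real.exp (-b ^ 2) / c))
    apply squeeze_zero' ?_ ?_ hlim
    · filter_upwards [eventually_ge_atTop (0:ℝ)] with t ht
      apply mul_nonneg (div_nonneg ht (hsum t).le)
      exact div_nonneg (hEpos t).le (hdpos t).le
    · filter_upwards [eventually_ge_atTop (0:ℝ)] with t ht
      have hq : t / (b ^ 2 + t ^ 2) ≤ 1 / b := by
        rw [div_le_div_iff₀ (hsum t) hb]
        nlinarith [sq_nonneg (t - b)]
      calc g t ≤ (1 / b) * ((Real.exp (-b ^ 2) / c) * Real.exp (-t ^ 2)) := by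
            apply mul_le_mul hq (hEbound t) (div_nonneg (hEpos t).le (hdpos t).le) (by positivity)
        _ = 1 / b * (Real.exp (-b ^ 2) / c) * Real.exp (-t ^ 2) := by ring
  -- FTC : integral of derivative is zero
  have hI' : IntegrableOn (fun t => h4 t - h1 t - 2 * h2 t) (Set.Ioi 0) :=
    (I4.sub I1).sub (I2.const_mul 2)
  have hFTC : ∫ t in Set.Ioi (0:ℝ), (h4 t - h1 t - 2 * h2 t) = 0 := by
    have := integral_Ioi_of_hasDerivAt_of_tendsto
      (f := g) (f' := fun t => h4 t - h1 t - 2 * h2 t) (a := 0) (m := 0)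
      (Continuous.continuousWithinAt (by fun_prop (disch := intro t; positivity)))
      (fun x _ => hderiv x) hI' hgtend
    simpa [hgdef] using this
  have e1 : (∫ t in Set.Ioi (0:ℝ), (h4 t - h1 t - 2 * h2 t))
      = (∫ t in Set.Ioi (0:ℝ), (h4 t - h1 t)) - ∫ t in Set.Ioi (0:ℝ), 2 * h2 t :=
    integral_sub (I4.sub I1) (I2.const_mul 2)
  have e2 : (∫ t in Set.Ioi (0:ℝ), (h4 t - h1 t))
      = (∫ t in Set.Ioi (0:ℝ), h4 t) - ∫ t in Set.Ioi (0:ℝ), h1 t := integral_sub I4 I1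
  have e3 : (∫ t in Set.Ioi (0:ℝ), 2 * h2 t) = 2 * ∫ t in Set.Ioi (0:ℝ), h2 t :=
    integral_const_mul 2 h2
  have hsplit : (∫ t in Set.Ioi (0:ℝ), h4 t) - (∫ t in Set.Ioi (0:ℝ), h1 t)
      - 2 * (∫ t in Set.Ioi (0:ℝ), h2 t) = 0 := by
    rw [e1, e2, e3] at hFTC; linarith
  -- relation between h4, h1, h3
  have e4 : (∫ t in Set.Ioi (0:ℝ), (h4 t + h1 t))
      = (∫ t in Set.Ioi (0:ℝ), h4 t) + ∫ t in Set.Ioi (0:ℝ), h1 t := integral_add I4 I1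
  have e5 : (∫ t in Set.Ioi (0:ℝ), (1 / b ^ 2) * h3 t) = (1 / b ^ 2) * ∫ t in Set.Ioi (0:ℝ), h3 t :=
    integral_const_mul _ h3
  have hrel : (∫ t in Set.Ioi (0:ℝ), h4 t) + (∫ t in Set.Ioi (0:ℝ), h1 t)
      = (1 / b ^ 2) * ∫ t in Set.Ioi (0:ℝ), h3 t := by
    rw [← e4, ← e5]
    apply integral_congr_ae
    filter_upwards with t
    rw [h4def, h1def, h3def]
    calc b ^ 2 / (b ^ 2 + t ^ 2) ^ 2 * (E t / (1 - E t))
          + t ^ 2 / (b ^ 2 + t ^ 2) ^ 2 * (E t / (1 - E t))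
        = (b ^ 2 / (b ^ 2 + t ^ 2) ^ 2 + t ^ 2 / (b ^ 2 + t ^ 2) ^ 2) * (E t / (1 - E t)) := by
          ring
      _ = (1 / b ^ 2 * (b ^ 2 / (b ^ 2 + t ^ 2))) * (E t / (1 - E t)) := by
          rw [aux_frac b t hb]
      _ = 1 / b ^ 2 * (b ^ 2 / (b ^ 2 + t ^ 2) * (E t / (1 - E t))) := by ring
  have hbne : (b:ℝ) ^ 2 ≠ 0 := hb2.ne'
  -- conclude
  show (∫ t in Set.Ioi (0:ℝ), h1 t) + (∫ t in Set.Ioi (0:ℝ), h2 t)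
      = (∫ t in Set.Ioi (0:ℝ), h3 t) / (2 * b ^ 2)
  have hrel' : b ^ 2 * ((∫ t in Set.Ioi (0:ℝ), h4 t) + ∫ t in Set.Ioi (0:ℝ), h1 t)
      = ∫ t in Set.Ioi (0:ℝ), h3 t := by
    rw [hrel]; field_simp
  field_simp
  linear_combination hrel' - b ^ 2 * hsplit
end
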